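/- arXiv:1802.04308 — 5 statements merged into one kernel-verified Lean document; each statement's English description precedes it below -/
import Mathlib

section
/- The function g₂(t) = 2(exp(t) - 1 - t)/t², extended by continuity with g₂(0) = 1, is monotone increasing on ℝ. -/
noncomputable def g2 (t : ℝ) : ℝ := if t = 0 then 1 else 2 * (Real.exp t - 1 - t) / t ^ 2

/-!
Taylor's formula with integral remainder gives `g2 t = ∫₀¹ 2 (1 - s) e^{s t} ds` for every `t`
(at `t = 0` both sides are `1`). The weight `2 (1 - s)` is nonnegative on `[0, 1]` and each
`t ↦ e^{s t}` with `s ≥ 0` is increasing, so the integral is increasing in `t`.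
-/

open Real Set intervalIntegral

theorem monotone_integral_mul_exp_mul {w : ℝ → ℝ} {a b : ℝ} (ha : 0 ≤ a) (hab : a ≤ b)
    (hw : ContinuousOn w (Icc a b)) (hw_nonneg : ∀ s ∈ Icc a b, 0 ≤ w s) :
    Monotone fun t => ∫ s in a..b, w s * exp (s * t) := by
  intro t u htu
  have hint (t : ℝ) : IntervalIntegrable (fun s => w s * exp (s * t)) MeasureTheory.volume a b :=
    ContinuousOn.intervalIntegrable <| by rw [uIcc_of_le hab]; exact hw.mul (by fun_prop)
  refine integral_mono_on hab (hint t) (hint u) fun s hs => ?_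
  have hs0 : 0 ≤ s := ha.trans hs.1
  gcongr
  exact hw_nonneg s hs

theorem hasDerivAt_one_sub_mul_exp_mul_antideriv {t : ℝ} (ht : t ≠ 0) (s : ℝ) :
    HasDerivAt (fun s => (1 - s) * exp (s * t) / t + exp (s * t) / t ^ 2)
      ((1 - s) * exp (s * t)) s := by
  have he : HasDerivAt (fun s => exp (s * t)) (exp (s * t) * t) s :=
    ((hasDerivAt_id s).mul_const t).exp.congr_deriv (by simp)
  have hl : HasDerivAt (fun s : ℝ => 1 - s) (-1) s := (hasDerivAt_id' s).const_sub 1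
  refine (((hl.mul he).div_const t).add (he.div_const (t ^ 2))).congr_deriv ?_
  field_simp
  ring

theorem integral_one_sub_mul_exp_mul {t : ℝ} (ht : t ≠ 0) :
    ∫ s in (0 : ℝ)..1, (1 - s) * exp (s * t) = (exp t - 1 - t) / t ^ 2 := by
  rw [integral_eq_sub_of_hasDerivAt (fun s _ => hasDerivAt_one_sub_mul_exp_mul_antideriv ht s)
    (by apply Continuous.intervalIntegrable; fun_prop)]
  simp only [sub_self, zero_mul, mul_one, exp_zero, sub_zero, one_mul]
  field_simp
  ring

theorem g2_eq_integral (t : ℝ) : g2 t = ∫ s in (0 : ℝ)..1, 2 * (1 - s) * exp (s * t) := by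
  simp_rw [mul_assoc, integral_const_mul]
  by_cases ht : t = 0
  · subst ht
    simp only [mul_zero, exp_zero, mul_one, integral_comp_sub_left (fun x => x)]
    norm_num [g2]
  · rw [g2, if_neg ht, integral_one_sub_mul_exp_mul ht, mul_div_assoc]

theorem g2_monotone : Monotone g2 := by
  simp_rw [funext g2_eq_integral]
  exact monotone_integral_mul_exp_mul le_rfl zero_le_one (by fun_prop)
    fun s hs => by linarith [hs.2]
end

section
/- For all real t and b with t ≤ b, one has exp(t) ≤ 1 + t + g₂(b)·t²/2, where g₂(b) = 2(e^b - 1 - b)/b² (with g₂(0) = 1). -/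
/-! Taylor's formula with integral remainder writes `exp t - 1 - t = t ^ 2 * q t` with
`q x = ∫₀¹ (1 - s) exp (s x) ds`. The integrand is monotone in `x`, so `q t ≤ q b` for `t ≤ b`,
and `g2 b = 2 q b` (for `b = 0` both sides equal `1`). -/

open Real intervalIntegral

noncomputable def expTaylorRemainderCoeff (x : ℝ) : ℝ := ∫ s in (0 : ℝ)..1, (1 - s) * exp (s * x)

lemma sq_mul_expTaylorRemainderCoeff (x : ℝ) :
    x ^ 2 * expTaylorRemainderCoeff x = exp x - 1 - x := by
  -- An antiderivative free of division by `x`, so that `x = 0` needs no separate case.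
  have hderiv : ∀ s : ℝ, HasDerivAt (fun s => x * (1 - s) * exp (s * x) + exp (s * x))
      (x ^ 2 * ((1 - s) * exp (s * x))) s := by
    intro s
    have hexp : HasDerivAt (fun s => exp (s * x)) (exp (s * x) * x) s :=
      (hasDerivAt_mul_const x).exp
    exact ((((hasDerivAt_id' s).const_sub 1).const_mul x).mul hexp |>.add hexp).congr_deriv
      (by ring)
  rw [expTaylorRemainderCoeff, ← integral_const_mul,
    integral_eq_sub_of_hasDerivAt (fun s _ => hderiv s)
    (Continuous.intervalIntegrable (by fun_prop) _ _)]
  simp only [sub_self, mul_zero, one_mul, zero_mul, zero_add, sub_zero, mul_one, exp_zero]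
  ring

lemma monotone_expTaylorRemainderCoeff : Monotone expTaylorRemainderCoeff := by
  intro t b htb
  refine integral_mono_on zero_le_one (Continuous.intervalIntegrable (by fun_prop) _ _)
    (Continuous.intervalIntegrable (by fun_prop) _ _) fun s ⟨hs0, hs1⟩ => ?_
  gcongr

lemma g2_eq_two_mul_expTaylorRemainderCoeff (b : ℝ) : g2 b = 2 * expTaylorRemainderCoeff b := by
  by_cases hb : b = 0
  · simp only [g2, hb, expTaylorRemainderCoeff, if_true, mul_zero, exp_zero, mul_one]
    rw [integral_sub intervalIntegrable_const intervalIntegrable_id]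
    norm_num
  · rw [g2, if_neg hb, ← sq_mul_expTaylorRemainderCoeff]
    field_simp

theorem exp_le_quadratic (t b : ℝ) (h : t ≤ b) :
    Real.exp t ≤ 1 + t + g2 b * t ^ 2 / 2 := by
  calc exp t = 1 + t + t ^ 2 * expTaylorRemainderCoeff t := by
        rw [sq_mul_expTaylorRemainderCoeff]; ring
    _ ≤ 1 + t + t ^ 2 * expTaylorRemainderCoeff b := by
        gcongr; exact monotone_expTaylorRemainderCoeff h
    _ = 1 + t + g2 b * t ^ 2 / 2 := by
        rw [g2_eq_two_mul_expTaylorRemainderCoeff]; ring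
end

section
/- Let X be a random vector in ℝ^d with E‖X‖² < ∞, m = E(X), and let α = ψ(λ‖X‖)/(λ‖X‖) (interpreted as 1 when X = 0), where ψ(t) = min(t,1) and λ > 0. Then for every unit vector θ, ⟨θ, αX - m⟩² ≤ ⟨θ, X - m⟩² + (1 - α)⟨θ, m⟩². -/
open MeasureTheory ProbabilityTheory
open scoped Classical
open scoped RealInnerProductSpace

lemma min_one_div_self_mem_Icc (t : ℝ) : min t 1 / t ∈ Set.Icc (0 : ℝ) 1 := by
  rcases lt_trichotomy t 0 with ht | rfl | ht
  · rw [min_eq_left (by linarith), div_self ht.ne]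
    exact ⟨zero_le_one, le_rfl⟩
  · simp
  · exact ⟨by positivity, div_le_one_of_le₀ (min_le_left _ _) ht.le⟩

lemma sq_mul_sub_le (a b : ℝ) {α : ℝ} (h0 : 0 ≤ α) (h1 : α ≤ 1) :
    (α * a - b) ^ 2 ≤ (a - b) ^ 2 + (1 - α) * b ^ 2 := by
  have gap : (a - b) ^ 2 + (1 - α) * b ^ 2 - (α * a - b) ^ 2
      = (1 - α) * ((a - b) ^ 2 + α * a ^ 2) := by ring
  have : 0 ≤ (1 - α) * ((a - b) ^ 2 + α * a ^ 2) := by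
    have := sub_nonneg.2 h1
    positivity
  linarith

lemma inner_smul_sub_sq_le {E : Type*} [NormedAddCommGroup E] [InnerProductSpace ℝ E]
    (θ x m : E) {α : ℝ} (h0 : 0 ≤ α) (h1 : α ≤ 1) :
    ⟪θ, α • x - m⟫ ^ 2 ≤ ⟪θ, x - m⟫ ^ 2 + (1 - α) * ⟪θ, m⟫ ^ 2 := by
  simpa only [inner_sub_right, real_inner_smul_right] using sq_mul_sub_le ⟪θ, x⟫ ⟪θ, m⟫ h0 h1

theorem threshold_inner_sq_bound_general {Ω : Type*} {d : ℕ}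
    (X : Ω → EuclideanSpace ℝ (Fin d))
    (lam : ℝ)
    (m : EuclideanSpace ℝ (Fin d))
    (θ : EuclideanSpace ℝ (Fin d)) (ω : Ω) :
    (fun α : ℝ => ⟪θ, α • X ω - m⟫ ^ 2 ≤ ⟪θ, X ω - m⟫ ^ 2 + (1 - α) * ⟪θ, m⟫ ^ 2)
      (if X ω = 0 then 1 else min (lam * ‖X ω‖) 1 / (lam * ‖X ω‖)) := by
  have hα : (if X ω = 0 then 1 else min (lam * ‖X ω‖) 1 / (lam * ‖X ω‖))
      ∈ Set.Icc (0 : ℝ) 1 := by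
    split_ifs
    · exact ⟨zero_le_one, le_rfl⟩
    · exact min_one_div_self_mem_Icc _
  exact inner_smul_sub_sq_le θ (X ω) m hα.1 hα.2

theorem threshold_inner_sq_bound {Ω : Type*} [MeasureSpace Ω]
    [IsProbabilityMeasure (ℙ : Measure Ω)] {d : ℕ}
    (X : Ω → EuclideanSpace ℝ (Fin d)) (hX : MemLp X 2 (ℙ : Measure Ω))
    (lam : ℝ) (hlam : 0 < lam)
    (m : EuclideanSpace ℝ (Fin d)) (hm : m = ∫ ω, X ω)
    (θ : EuclideanSpace ℝ (Fin d)) (hθ : ‖θ‖ = 1) (ω : Ω) :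
    (fun α : ℝ => ⟪θ, α • X ω - m⟫ ^ 2 ≤ ⟪θ, X ω - m⟫ ^ 2 + (1 - α) * ⟪θ, m⟫ ^ 2)
      (if X ω = 0 then 1 else min (lam * ‖X ω‖) 1 / (lam * ‖X ω‖)) :=
  threshold_inner_sq_bound_general X lam m θ ω
end

section
/- Let X be a random vector in ℝ^d with mean m, λ > 0, α = ψ(λ‖X‖)/(λ‖X‖) (α = 1 if X = 0) with ψ(t) = min(t,1), and m̃ = E(αX). Then for any unit vector θ and any real p ≥ 1 and q ≥ 2, ⟨θ, m̃ - m⟩ ≤ (λ^p/(p+1))·(p/(p+1))^p · E(‖X‖^p · max(0, -⟨θ, X - m⟩)) + (λ^q/(q+1))·(q/(q+1))^q · E(‖X‖^q) · max(0, -⟨θ, m⟩), provided the expectations involved are finite. -/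
open MeasureTheory ProbabilityTheory
open scoped Classical
open scoped RealInnerProductSpace

lemma sub_one_le_rpow_aux (p t : ℝ) (hp : 1 ≤ p) (ht : 0 ≤ t) :
    t - 1 ≤ (p / (p + 1)) ^ p / (p + 1) * t ^ (p + 1) := by
  have hp0 : 0 < p := lt_of_lt_of_le one_pos hp
  have hp1 : (0 : ℝ) < p + 1 := by linarith
  set t0 : ℝ := (p + 1) / p with ht0def
  have ht0 : 0 < t0 := div_pos hp1 hp0
  set c : ℝ := (p / (p + 1)) ^ p with hcdef
  have hc0 : 0 < c := Real.rpow_pos_of_pos (div_pos hp0 hp1) p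
  have hx : (-1 : ℝ) ≤ t / t0 - 1 := by
    have : 0 ≤ t / t0 := div_nonneg ht ht0.le
    linarith
  have hbern := one_add_mul_self_le_rpow_one_add hx (by linarith : (1:ℝ) ≤ p + 1)
  rw [add_sub_cancel] at hbern
  have hCt0 : c * t0 ^ p = 1 := by
    rw [hcdef, ← Real.mul_rpow (by positivity) ht0.le,
      show p / (p + 1) * t0 = 1 by rw [ht0def]; field_simp, Real.one_rpow]
  have ht0pinv : t0 ^ p = c⁻¹ := by
    field_simp at hCt0 ⊢
    linarith [hCt0]
  have hdiv : (t / t0) ^ (p + 1) = t ^ (p + 1) / t0 ^ (p + 1) :=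
    Real.div_rpow ht ht0.le (p + 1)
  have ht0p : t0 ^ (p + 1) = c⁻¹ * t0 := by
    rw [Real.rpow_add ht0, Real.rpow_one, ht0pinv]
  have h2 : 1 + (p + 1) * (t / t0 - 1) ≤ t ^ (p + 1) / (c⁻¹ * t0) := by
    rw [← ht0p, ← hdiv]; exact hbern
  have hpos : 0 < c⁻¹ * t0 := by positivity
  have h3 : (1 + (p + 1) * (t / t0 - 1)) * (c⁻¹ * t0) ≤ t ^ (p + 1) :=
    (le_div_iff₀ hpos).mp h2
  have hkey : t - 1 = c / (p + 1) * ((1 + (p + 1) * (t / t0 - 1)) * (c⁻¹ * t0)) := by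
    rw [ht0def]
    field_simp
    ring
  rw [hkey]
  exact mul_le_mul_of_nonneg_left h3 (by positivity)

lemma one_sub_min_div_le (p t : ℝ) (hp : 1 ≤ p) (ht : 0 < t) :
    1 - min t 1 / t ≤ (p / (p + 1)) ^ p / (p + 1) * t ^ p := by
  have hp1 : (0 : ℝ) < p + 1 := by linarith
  rcases le_total t 1 with h1 | h1
  · rw [min_eq_left h1, div_self ht.ne']
    have : 0 ≤ (p / (p + 1)) ^ p / (p + 1) * t ^ p := by positivity
    linarith
  · rw [min_eq_right h1]
    have h := sub_one_le_rpow_aux p t hp ht.le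
    rw [Real.rpow_add ht, Real.rpow_one] at h
    have hmul : (1 - 1 / t) * t ≤ (p / (p + 1)) ^ p / (p + 1) * t ^ p * t := by
      have : (1 - 1 / t) * t = t - 1 := by field_simp
      rw [this]; linarith [h]
    exact le_of_mul_le_mul_right hmul ht

theorem bias_bound {Ω : Type*} [MeasureSpace Ω]
    [IsProbabilityMeasure (ℙ : Measure Ω)] {d : ℕ}
    (X : Ω → EuclideanSpace ℝ (Fin d)) (hX : Integrable X ℙ)
    (lam : ℝ) (hlam : 0 < lam)
    (m : EuclideanSpace ℝ (Fin d)) (hm : m = ∫ ω, X ω)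
    (α : Ω → ℝ)
    (hα : ∀ ω, α ω = if X ω = 0 then 1 else min (lam * ‖X ω‖) 1 / (lam * ‖X ω‖))
    (hαX : Integrable (fun ω => α ω • X ω) ℙ)
    (mt : EuclideanSpace ℝ (Fin d)) (hmt : mt = ∫ ω, α ω • X ω)
    (θ : EuclideanSpace ℝ (Fin d)) (hθ : ‖θ‖ = 1)
    (p q : ℝ) (hp : 1 ≤ p) (hq : 2 ≤ q)
    (hintp : Integrable (fun ω => ‖X ω‖ ^ p * max 0 (-⟪θ, X ω - m⟫)) ℙ)
    (hintq : Integrable (fun ω => ‖X ω‖ ^ q) (ℙ : Measure Ω)) :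
    ⟪θ, mt - m⟫ ≤
      (lam ^ p / (p + 1)) * (p / (p + 1)) ^ p *
        (∫ ω, ‖X ω‖ ^ p * max 0 (-⟪θ, X ω - m⟫)) +
      (lam ^ q / (q + 1)) * (q / (q + 1)) ^ q *
        (∫ ω, ‖X ω‖ ^ q) * max 0 (-⟪θ, m⟫) := by
  have hq1 : 1 ≤ q := by linarith
  have hp1 : (0 : ℝ) < p + 1 := by linarith
  have hq1' : (0 : ℝ) < q + 1 := by linarith
  set Cp : ℝ := (lam ^ p / (p + 1)) * (p / (p + 1)) ^ p with hCpdef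
  set Cq : ℝ := (lam ^ q / (q + 1)) * (q / (q + 1)) ^ q with hCqdef
  set M2 : ℝ := max 0 (-⟪θ, m⟫) with hM2def
  have hM2 : 0 ≤ M2 := le_max_left _ _
  set f : Ω → ℝ := fun ω => ⟪θ, α ω • X ω - X ω⟫ with hfdef
  set g : Ω → ℝ := fun ω =>
    Cp * (‖X ω‖ ^ p * max 0 (-⟪θ, X ω - m⟫)) + (Cq * ‖X ω‖ ^ q) * M2 with hgdef
  have hfint : Integrable f ℙ := (hαX.sub hX).const_inner θ
  have hgint : Integrable g ℙ :=
    (hintp.const_mul Cp).add ((hintq.const_mul Cq).mul_const M2)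
  have hCp0 : 0 ≤ Cp := by
    apply mul_nonneg (div_nonneg (Real.rpow_nonneg hlam.le p) hp1.le)
    exact Real.rpow_nonneg (by positivity) p
  have hCq0 : 0 ≤ Cq := by
    apply mul_nonneg (div_nonneg (Real.rpow_nonneg hlam.le q) hq1'.le)
    exact Real.rpow_nonneg (by positivity) q
  have hle : ∀ ω, f ω ≤ g ω := by
    intro ω
    set M1 : ℝ := max 0 (-⟪θ, X ω - m⟫) with hM1def
    have hM1 : 0 ≤ M1 := le_max_left _ _
    have hBp : 0 ≤ Cp * ‖X ω‖ ^ p :=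
      mul_nonneg hCp0 (Real.rpow_nonneg (norm_nonneg _) p)
    have hBq : 0 ≤ Cq * ‖X ω‖ ^ q :=
      mul_nonneg hCq0 (Real.rpow_nonneg (norm_nonneg _) q)
    set a : ℝ := 1 - α ω with hadef
    have hf : f ω = a * (-⟪θ, X ω⟫) := by
      simp only [hfdef, inner_sub_right, real_inner_smul_right, hadef]
      ring
    have hs : -⟪θ, X ω⟫ ≤ M1 + M2 := by
      have h1 : -⟪θ, X ω - m⟫ ≤ M1 := le_max_right _ _
      have h2 : -⟪θ, m⟫ ≤ M2 := le_max_right _ _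
      rw [inner_sub_right] at h1
      linarith
    by_cases hx0 : X ω = 0
    · have : α ω = 1 := by rw [hα ω, if_pos hx0]
      have ha : a = 0 := by rw [hadef, this]; ring
      rw [hf, ha]
      have : (0:ℝ) ≤ g ω := by
        apply add_nonneg
        · exact mul_nonneg hCp0 (mul_nonneg (Real.rpow_nonneg (norm_nonneg _) p) hM1)
        · exact mul_nonneg hBq hM2
      linarith
    · set t : ℝ := lam * ‖X ω‖ with htdef
      have ht : 0 < t := mul_pos hlam (norm_pos_iff.mpr hx0)
      have hαω : α ω = min t 1 / t := by rw [hα ω, if_neg hx0]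
      have ha0 : 0 ≤ a := by
        rw [hadef, hαω]
        have : min t 1 / t ≤ 1 := by
          rw [div_le_one ht]; exact min_le_left _ _
        linarith
      have hbound : ∀ r : ℝ, 1 ≤ r →
          a ≤ (lam ^ r / (r + 1)) * (r / (r + 1)) ^ r * ‖X ω‖ ^ r := by
        intro r hr
        have h := one_sub_min_div_le r t hr ht
        rw [hadef, hαω]
        have htr : t ^ r = lam ^ r * ‖X ω‖ ^ r :=
          Real.mul_rpow hlam.le (norm_nonneg _)
        calc 1 - min t 1 / t ≤ (r / (r + 1)) ^ r / (r + 1) * t ^ r := h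
          _ = (lam ^ r / (r + 1)) * (r / (r + 1)) ^ r * ‖X ω‖ ^ r := by
              rw [htr]; ring
      have haP : a ≤ Cp * ‖X ω‖ ^ p := by
        have := hbound p hp; rw [hCpdef]; linarith
      have haQ : a ≤ Cq * ‖X ω‖ ^ q := by
        have := hbound q hq1; rw [hCqdef]; linarith
      rw [hf]
      have hg : g ω = Cp * ‖X ω‖ ^ p * M1 + Cq * ‖X ω‖ ^ q * M2 := by
        rw [hgdef]; ring
      rw [hg]
      nlinarith [mul_le_mul_of_nonneg_left hs ha0,
        mul_le_mul_of_nonneg_right haP hM1,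
        mul_le_mul_of_nonneg_right haQ hM2]
  have hL : ⟪θ, mt - m⟫ = ∫ ω, f ω := by
    rw [hmt, hm, ← integral_sub hαX hX]
    exact (integral_inner (hαX.sub hX) θ).symm
  have hmono : ∫ ω, f ω ≤ ∫ ω, g ω := integral_mono hfint hgint hle
  have hR : ∫ ω, g ω = Cp * (∫ ω, ‖X ω‖ ^ p * max 0 (-⟪θ, X ω - m⟫)) +
      Cq * (∫ ω, ‖X ω‖ ^ q) * M2 := by
    rw [hgdef, integral_add (hintp.const_mul Cp) ((hintq.const_mul Cq).mul_const M2),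
      integral_const_mul, integral_mul_const, integral_const_mul]
  rw [hL]
  calc ∫ ω, f ω ≤ ∫ ω, g ω := hmono
    _ = _ := by rw [hR]
end

section
/- Let X be a random vector in ℝ^d with E‖X‖² < ∞ and mean m, and suppose sup over unit vectors θ of E(⟨θ, X - m⟩²) ≤ v. With ψ(t) = min(t,1), λ > 0, α = ψ(λ‖X‖)/(λ‖X‖) (α = 1 if X = 0), Y = αX, and m̃ = E(Y): for every unit vector θ and every real p ≥ 2, E(⟨θ, Y - m̃⟩²) ≤ v + ⟨θ, m⟩² · (λ^p/(p+1))·(p/(p+1))^p · E(‖X‖^p), provided E(‖X‖^p) < ∞. -/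
open MeasureTheory ProbabilityTheory
open scoped RealInnerProductSpace Classical

/-!
Along θ, the mean `E ⟪θ, Y⟫` minimises `c ↦ E (⟪θ, Y⟫ - c)²` (a variance is at most the second
moment about any point), so one may centre at `m` instead of `m̃`. With `Y = α X`, `0 ≤ α ≤ 1`,
the identity `(y - c)² + (1 - α) c² - (α y - c)² = (1 - α) ((y - c)² + α y²)` gives
`⟪θ, Y - m⟫² ≤ ⟪θ, X - m⟫² + (1 - α) ⟪θ, m⟫²`. Finally `1 - α ≤ max (0, 1 - 1/t)` with
`t = λ‖X‖`, and `(1 - s) s^p` is maximal at `s = p/(p+1)`, which weighted AM-GM turns into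
`1 - 1/t ≤ (p/(p+1))^p t^p / (p+1)`.
-/

lemma one_le_rpow_add_inv {p t : ℝ} (hp : 0 < p) (ht : 0 < t) :
    1 ≤ (p / (p + 1)) ^ p / (p + 1) * t ^ p + t⁻¹ := by
  set u := p / (p + 1)
  have hu : 0 < u := by positivity
  have hut : 0 < u * t := mul_pos hu ht
  -- weighted AM-GM for `(u t)^p` and `(u t)⁻¹` with weights `1/(p+1)` and `p/(p+1)`
  have amgm := Real.geom_mean_le_arith_mean2_weighted (w₁ := 1 / (p + 1)) (w₂ := u)
    (by positivity) hu.le (Real.rpow_nonneg hut.le p) (inv_nonneg.mpr hut.le)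
    (by simp only [u]; field_simp; ring)
  have hgm : ((u * t) ^ p) ^ (1 / (p + 1)) * (u * t)⁻¹ ^ u = 1 := by
    rw [← Real.rpow_mul hut.le, Real.inv_rpow hut.le, mul_one_div]
    exact mul_inv_cancel₀ (Real.rpow_pos_of_pos hut _).ne'
  rw [hgm, Real.mul_rpow hu.le ht.le, mul_inv, mul_inv_cancel_left₀ hu.ne'] at amgm
  linarith [show 1 / (p + 1) * (u ^ p * t ^ p) = u ^ p / (p + 1) * t ^ p by ring]

lemma one_sub_min_one_div_le {p t : ℝ} (hp : 0 < p) (ht : 0 < t) :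
    1 - min t 1 / t ≤ (p / (p + 1)) ^ p / (p + 1) * t ^ p := by
  rcases le_total t 1 with h | h
  · rw [min_eq_left h, div_self ht.ne', sub_self]
    positivity
  · rw [min_eq_right h, one_div]
    linarith [one_le_rpow_add_inv hp ht]

lemma sq_mul_sub_le_s17 {a y c : ℝ} (ha₀ : 0 ≤ a) (ha₁ : a ≤ 1) :
    (a * y - c) ^ 2 ≤ (y - c) ^ 2 + (1 - a) * c ^ 2 := by
  nlinarith [mul_nonneg (sub_nonneg.mpr ha₁)
    (add_nonneg (sq_nonneg (y - c)) (mul_nonneg ha₀ (sq_nonneg y)))]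

lemma integral_inner_sub_integral_sq_le {Ω E : Type*} [MeasurableSpace Ω] {μ : Measure Ω}
    [IsProbabilityMeasure μ] [NormedAddCommGroup E] [InnerProductSpace ℝ E] [CompleteSpace E]
    {Y : Ω → E} (hY : Integrable Y μ) (θ m : E) :
    ∫ ω, ⟪θ, Y ω - ∫ ω', Y ω' ∂μ⟫ ^ 2 ∂μ ≤ ∫ ω, ⟪θ, Y ω - m⟫ ^ 2 ∂μ := by
  have hZ : AEStronglyMeasurable (fun ω => ⟪θ, Y ω⟫) μ := (hY.const_inner θ).aestronglyMeasurable
  simp only [inner_sub_right, ← integral_inner hY θ]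
  rw [← variance_eq_integral hZ.aemeasurable, ← variance_sub_const hZ]
  exact variance_le_expectation_sq (by fun_prop)

section truncation

variable {E : Type*} [NormedAddCommGroup E] {lam : ℝ}

noncomputable def truncFactor (lam : ℝ) (x : E) : ℝ :=
  if x = 0 then 1 else min (lam * ‖x‖) 1 / (lam * ‖x‖)

lemma truncFactor_smul [Module ℝ E] (lam : ℝ) (x : E) [Decidable (x = 0)] :
    truncFactor lam x • x = if x = 0 then 0 else (min (lam * ‖x‖) 1 / (lam * ‖x‖)) • x := by
  unfold truncFactor
  split_ifs with hx <;> simp [hx]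

lemma truncFactor_nonneg (hlam : 0 ≤ lam) (x : E) : 0 ≤ truncFactor lam x := by
  unfold truncFactor
  split_ifs <;> positivity

lemma truncFactor_le_one (hlam : 0 ≤ lam) (x : E) : truncFactor lam x ≤ 1 := by
  unfold truncFactor
  split_ifs
  · rfl
  · exact div_le_one_of_le₀ (min_le_left _ _) (by positivity)

lemma one_sub_truncFactor_le (hlam : 0 < lam) {p : ℝ} (hp : 0 < p) (x : E) :
    1 - truncFactor lam x ≤ lam ^ p / (p + 1) * (p / (p + 1)) ^ p * ‖x‖ ^ p := by
  unfold truncFactor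
  split_ifs with hx
  · rw [sub_self]
    positivity
  · have ht : 0 < lam * ‖x‖ := mul_pos hlam (norm_pos_iff.mpr hx)
    calc 1 - min (lam * ‖x‖) 1 / (lam * ‖x‖)
        ≤ (p / (p + 1)) ^ p / (p + 1) * (lam * ‖x‖) ^ p := one_sub_min_one_div_le hp ht
      _ = lam ^ p / (p + 1) * (p / (p + 1)) ^ p * ‖x‖ ^ p := by
        rw [Real.mul_rpow hlam.le (norm_nonneg x)]; ring

variable [NormedSpace ℝ E]

lemma norm_truncFactor_smul_le (hlam : 0 ≤ lam) (x : E) : ‖truncFactor lam x • x‖ ≤ ‖x‖ := by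
  rw [norm_smul, Real.norm_of_nonneg (truncFactor_nonneg hlam x)]
  exact mul_le_of_le_one_left (norm_nonneg x) (truncFactor_le_one hlam x)

lemma measurable_truncFactor_smul [MeasurableSpace E] [BorelSpace E] :
    Measurable fun x : E => truncFactor lam x • x := by
  refine Measurable.smul ?_ measurable_id
  exact Measurable.ite measurableSet_eq measurable_const (by fun_prop)

end truncation

lemma inner_truncFactor_smul_sub_sq_le {E : Type*} [NormedAddCommGroup E] [InnerProductSpace ℝ E]
    {lam p : ℝ} (hlam : 0 < lam) (hp : 0 < p) (θ m x : E) :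
    ⟪θ, truncFactor lam x • x - m⟫ ^ 2 ≤
      ⟪θ, x - m⟫ ^ 2 + ⟪θ, m⟫ ^ 2 * (lam ^ p / (p + 1)) * (p / (p + 1)) ^ p * ‖x‖ ^ p := by
  have hα := one_sub_truncFactor_le hlam hp x
  rw [inner_sub_right, inner_sub_right, inner_smul_right]
  calc (truncFactor lam x * ⟪θ, x⟫ - ⟪θ, m⟫) ^ 2
      ≤ (⟪θ, x⟫ - ⟪θ, m⟫) ^ 2 + (1 - truncFactor lam x) * ⟪θ, m⟫ ^ 2 :=
        sq_mul_sub_le_s17 (truncFactor_nonneg hlam.le x) (truncFactor_le_one hlam.le x)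
    _ ≤ _ := by linarith [mul_le_mul_of_nonneg_right hα (sq_nonneg ⟪θ, m⟫)]

theorem truncated_second_moment_bound_general {Ω : Type*} [MeasureSpace Ω]
    [IsProbabilityMeasure (ℙ : Measure Ω)] {d : ℕ}
    (X : Ω → EuclideanSpace ℝ (Fin d)) (hX : MemLp X 2 (ℙ : Measure Ω))
    (m : EuclideanSpace ℝ (Fin d))
    (v : ℝ) (hv : ∀ θ : EuclideanSpace ℝ (Fin d), ‖θ‖ = 1 →
      ∫ ω, ⟪θ, X ω - m⟫ ^ 2 ≤ v)
    (lam : ℝ) (hlam : 0 < lam)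
    (Y : Ω → EuclideanSpace ℝ (Fin d))
    (hY : ∀ ω, Y ω = if X ω = 0 then 0 else
      (min (lam * ‖X ω‖) 1 / (lam * ‖X ω‖)) • X ω)
    (mt : EuclideanSpace ℝ (Fin d)) (hmt : mt = ∫ ω, Y ω)
    (θ : EuclideanSpace ℝ (Fin d)) (hθ : ‖θ‖ = 1)
    (p : ℝ) (hp : 2 ≤ p) (hXp : Integrable (fun ω => ‖X ω‖ ^ p) (ℙ : Measure Ω)) :
    ∫ ω, ⟪θ, Y ω - mt⟫ ^ 2 ≤
      v + ⟪θ, m⟫ ^ 2 * (lam ^ p / (p + 1)) * (p / (p + 1)) ^ p * ∫ ω, ‖X ω‖ ^ p := by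
  have hp0 : 0 < p := by linarith
  obtain rfl : Y = fun ω => truncFactor lam (X ω) • X ω :=
    funext fun ω => (hY ω).trans (truncFactor_smul lam (X ω)).symm
  subst hmt
  have hXi : Integrable X := hX.integrable one_le_two
  have hYi : Integrable (fun ω => truncFactor lam (X ω) • X ω) :=
    hXi.mono (measurable_truncFactor_smul.comp_aemeasurable hXi.aemeasurable).aestronglyMeasurable
      (ae_of_all _ fun ω => norm_truncFactor_smul_le hlam.le (X ω))
  have hXθ : Integrable (fun ω => ⟪θ, X ω - m⟫ ^ 2) :=
    ((hX.sub (memLp_const m)).const_inner θ).integrable_sq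
  calc _ ≤ ∫ ω, ⟪θ, truncFactor lam (X ω) • X ω - m⟫ ^ 2 :=
        integral_inner_sub_integral_sq_le hYi θ m
    _ ≤ ∫ ω, (⟪θ, X ω - m⟫ ^ 2 +
          ⟪θ, m⟫ ^ 2 * (lam ^ p / (p + 1)) * (p / (p + 1)) ^ p * ‖X ω‖ ^ p) :=
        integral_mono_of_nonneg (ae_of_all _ fun _ => sq_nonneg _) (hXθ.add (hXp.const_mul _))
          (ae_of_all _ fun ω => inner_truncFactor_smul_sub_sq_le hlam hp0 θ m (X ω))
    _ = (∫ ω, ⟪θ, X ω - m⟫ ^ 2) +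
          ⟪θ, m⟫ ^ 2 * (lam ^ p / (p + 1)) * (p / (p + 1)) ^ p * ∫ ω, ‖X ω‖ ^ p := by
        rw [integral_add hXθ (hXp.const_mul _), integral_const_mul]
    _ ≤ _ := add_le_add_left (hv θ hθ) _

theorem truncated_second_moment_bound {Ω : Type*} [MeasureSpace Ω]
    [IsProbabilityMeasure (ℙ : Measure Ω)] {d : ℕ}
    (X : Ω → EuclideanSpace ℝ (Fin d)) (hX : MemLp X 2 (ℙ : Measure Ω))
    (m : EuclideanSpace ℝ (Fin d)) (hm : m = ∫ ω, X ω)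
    (v : ℝ) (hv : ∀ θ : EuclideanSpace ℝ (Fin d), ‖θ‖ = 1 →
      ∫ ω, ⟪θ, X ω - m⟫ ^ 2 ≤ v)
    (lam : ℝ) (hlam : 0 < lam)
    (Y : Ω → EuclideanSpace ℝ (Fin d))
    (hY : ∀ ω, Y ω = if X ω = 0 then 0 else
      (min (lam * ‖X ω‖) 1 / (lam * ‖X ω‖)) • X ω)
    (mt : EuclideanSpace ℝ (Fin d)) (hmt : mt = ∫ ω, Y ω)
    (θ : EuclideanSpace ℝ (Fin d)) (hθ : ‖θ‖ = 1)
    (p : ℝ) (hp : 2 ≤ p) (hXp : Integrable (fun ω => ‖X ω‖ ^ p) (ℙ : Measure Ω)) :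
    ∫ ω, ⟪θ, Y ω - mt⟫ ^ 2 ≤
      v + ⟪θ, m⟫ ^ 2 * (lam ^ p / (p + 1)) * (p / (p + 1)) ^ p * ∫ ω, ‖X ω‖ ^ p :=
  truncated_second_moment_bound_general X hX m v hv lam hlam Y hY mt hmt θ hθ p hp hXp
end
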